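/- If the typed unification algorithm, run on generated constraints (C, T), returns false, then there exists a type substitution unifying all of T but no term substitution unifying all of C. -/

import Mathlib

inductive Tm (F V : Type) : Type
  | var : V → Tm F V
  | app : F → List (Tm F V) → Tm F V

namespace Tm
variable {F V : Type}

def subst (θ : V → Tm F V) : Tm F V → Tm F V
  | var x => θ x
  | app f ts => app f (ts.attach.map (fun t => subst θ t.1))
decreasing_by simp_wf; have := List.sizeOf_lt_of_mem t.2; omega

inductive Occurs (x : V) : Tm F V → Prop
  | var : Occurs x (var x)
  | app {f : F} {ts : List (Tm F V)} {t : Tm F V} : t ∈ ts → Occurs x t → Occurs x (app f ts)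

end Tm


/-- The substitution replacing the single variable `x` by `t`. -/
def single {F V : Type} [DecidableEq V] (x : V) (t : Tm F V) : V → Tm F V :=
  fun y => if y = x then t else Tm.var y

/-- Apply a substitution to both sides of an equation. -/
def applyEq {F V : Type} (σ : V → Tm F V) (p : Tm F V × Tm F V) : Tm F V × Tm F V :=
  (Tm.subst σ p.1, Tm.subst σ p.2)

/-- One step of the Martelli–Montanari rewriting rules on a finite (multi)set of
equations between first-order terms. -/
inductive Step {F V : Type} [DecidableEq V] :
    Multiset (Tm F V × Tm F V) → Multiset (Tm F V × Tm F V) → Prop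
  | decompose (f : F) (ts ss : List (Tm F V)) (R : Multiset (Tm F V × Tm F V))
      (hlen : ts.length = ss.length) :
      Step ((Tm.app f ts, Tm.app f ss) ::ₘ R) (↑(ts.zip ss) + R)
  | delete (t : Tm F V) (R : Multiset (Tm F V × Tm F V)) :
      Step ((t, t) ::ₘ R) R
  | orient (t : Tm F V) (x : V) (R : Multiset (Tm F V × Tm F V))
      (h : ∀ y : V, t ≠ Tm.var y) :
      Step ((t, Tm.var x) ::ₘ R) ((Tm.var x, t) ::ₘ R)
  | elim (x : V) (t : Tm F V) (R : Multiset (Tm F V × Tm F V))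
      (h1 : ¬ Tm.Occurs x t)
      (h2 : ∃ p ∈ R, Tm.Occurs x p.1 ∨ Tm.Occurs x p.2) :
      Step ((Tm.var x, t) ::ₘ R) ((Tm.var x, t) ::ₘ R.map (applyEq (single x t)))

/-- A clash: two applications with different head symbols or different arities. -/
def IsClash {F V : Type} (p : Tm F V × Tm F V) : Prop :=
  ∃ (f g : F) (ts ss : List (Tm F V)),
    p = (Tm.app f ts, Tm.app g ss) ∧ (f ≠ g ∨ ts.length ≠ ss.length)

/-- An occurs-check failure: an equation between a variable and a distinct term
containing it. -/
def IsOccursFail {F V : Type} (p : Tm F V × Tm F V) : Prop :=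
  ∃ (x : V) (t : Tm F V), (p = (Tm.var x, t) ∨ p = (t, Tm.var x)) ∧
    Tm.Occurs x t ∧ t ≠ Tm.var x

/-- A constraint set on which the algorithm fails. -/
def Fails {F V : Type} (S : Multiset (Tm F V × Tm F V)) : Prop :=
  ∃ p ∈ S, IsClash p ∨ IsOccursFail p

/-- A constraint set in solved (normal) form. -/
def SolvedWith {F V : Type} (S : Multiset (Tm F V × Tm F V))
    (L : List (V × Tm F V)) : Prop :=
  S = ↑(L.map (fun p => ((Tm.var p.1 : Tm F V), p.2))) ∧
    (L.map Prod.fst).Nodup ∧ ∀ p ∈ L, ∀ q ∈ L, ¬ Tm.Occurs p.1 q.2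

def Solved {F V : Type} (S : Multiset (Tm F V × Tm F V)) : Prop :=
  ∃ L, SolvedWith S L

/-- `θ` unifies every constraint in `S`. -/
def Unifies {F V : Type} (θ : V → Tm F V) (S : Multiset (Tm F V × Tm F V)) : Prop :=
  ∀ p ∈ S, Tm.subst θ p.1 = Tm.subst θ p.2

/-!
Every Martelli–Montanari step preserves the set of unifiers: decomposition because
substitution commutes with application, elimination because a unifier `θ` of `x = t`
satisfies `θ ∘ [x ↦ t] = θ`. Hence `T` has the unifiers of its solved form `T'`, which
has the unifier sending each solved variable to its right-hand side, and `C` has those of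
`C'`, which has none: a clash survives every substitution, and an occurs-check failure
`x = t` with `x` strictly inside `t` would make `θ x` a proper subterm of itself.
-/

namespace Tm
variable {F V : Type}

theorem ind {motive : Tm F V → Prop} (var : ∀ x, motive (.var x))
    (app : ∀ f ts, (∀ t ∈ ts, motive t) → motive (.app f ts)) : ∀ t, motive t
  | .var x => var x
  | .app f ts => app f ts (fun t _ => ind var app t)
decreasing_by have := List.sizeOf_lt_of_mem ‹t ∈ ts›; simp_wf; omega

@[simp] theorem subst_var (θ : V → Tm F V) (x : V) : subst θ (.var x) = θ x := by
  rw [subst]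

@[simp] theorem subst_app (θ : V → Tm F V) (f : F) (ts : List (Tm F V)) :
    subst θ (.app f ts) = .app f (ts.map (subst θ)) := by
  rw [subst, List.attach_map_val (f := subst θ)]

theorem subst_subst (θ σ : V → Tm F V) (t : Tm F V) :
    subst θ (subst σ t) = subst (fun y => subst θ (σ y)) t := by
  induction t using Tm.ind with
  | var x => simp
  | app f ts ih => simpa using List.map_congr_left ih

theorem subst_eq_self {θ : V → Tm F V} {t : Tm F V}
    (h : ∀ y, Occurs y t → θ y = .var y) : subst θ t = t := by
  induction t using Tm.ind with
  | var x => simpa using h x .var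
  | app f ts ih =>
    simpa using List.map_congr_left fun s hs => ih s hs fun y hy => h y (.app hs hy)

theorem sizeOf_le_sizeOf_subst_of_occurs {x : V} {t : Tm F V} (h : Occurs x t)
    (θ : V → Tm F V) : sizeOf (θ x) ≤ sizeOf (subst θ t) := by
  induction h with
  | var => simp
  | @app f ts s hs _ ih =>
    have := List.sizeOf_lt_of_mem (List.mem_map_of_mem (f := subst θ) hs)
    simp only [subst_app, Tm.app.sizeOf_spec]
    omega

theorem apply_ne_subst_app_of_occurs {x : V} {f : F} {ts : List (Tm F V)}
    (h : Occurs x (.app f ts)) (θ : V → Tm F V) : θ x ≠ subst θ (.app f ts) := by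
  obtain _ | ⟨hs, hocc⟩ := h
  intro heq
  have hle := sizeOf_le_sizeOf_subst_of_occurs hocc θ
  have hlt := List.sizeOf_lt_of_mem (List.mem_map_of_mem (f := subst θ) hs)
  rw [heq, subst_app, Tm.app.sizeOf_spec] at hle
  omega

theorem subst_subst_single [DecidableEq V] {θ : V → Tm F V} {x : V} {t : Tm F V}
    (hx : θ x = subst θ t) (s : Tm F V) : subst θ (subst (single x t) s) = subst θ s := by
  rw [subst_subst]
  congr 1
  funext y
  by_cases hy : y = x
  · simp [single, hy, hx]
  · simp [single, hy]

end Tm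

theorem List.map_eq_map_iff_forall_zip {α β : Type*} {g : α → β} {ts ss : List α}
    (hlen : ts.length = ss.length) :
    ts.map g = ss.map g ↔ ∀ p ∈ ts.zip ss, g p.1 = g p.2 := by
  rw [← List.forall₂_eq_eq_eq, List.forall₂_map_left_iff, List.forall₂_map_right_iff,
    List.forall₂_iff_zip]
  simp [hlen]

section Unifies
variable {F V : Type} {θ : V → Tm F V}

theorem unifies_cons {p : Tm F V × Tm F V} {S : Multiset (Tm F V × Tm F V)} :
    Unifies θ (p ::ₘ S) ↔ Tm.subst θ p.1 = Tm.subst θ p.2 ∧ Unifies θ S :=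
  Multiset.forall_mem_cons

theorem unifies_add {S R : Multiset (Tm F V × Tm F V)} :
    Unifies θ (S + R) ↔ Unifies θ S ∧ Unifies θ R := by
  simp only [Unifies, Multiset.mem_add, or_imp, forall_and]

theorem subst_app_eq_subst_app_iff_unifies_zip {f : F} {ts ss : List (Tm F V)}
    (hlen : ts.length = ss.length) :
    Tm.subst θ (.app f ts) = Tm.subst θ (.app f ss) ↔ Unifies θ ↑(ts.zip ss) := by
  simp only [Tm.subst_app, Tm.app.injEq, true_and, Unifies, Multiset.mem_coe]
  exact List.map_eq_map_iff_forall_zip hlen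

theorem unifies_map_applyEq_single [DecidableEq V] {x : V} {t : Tm F V}
    (hx : θ x = Tm.subst θ t) {R : Multiset (Tm F V × Tm F V)} :
    Unifies θ (R.map (applyEq (single x t))) ↔ Unifies θ R := by
  simp only [Unifies, Multiset.forall_mem_map_iff, applyEq, Tm.subst_subst_single hx]

theorem not_unifies_of_isClash {p : Tm F V × Tm F V} (h : IsClash p) :
    Tm.subst θ p.1 ≠ Tm.subst θ p.2 := by
  obtain ⟨f, g, ts, ss, rfl, hne⟩ := h
  intro heq
  simp only [Tm.subst_app, Tm.app.injEq] at heq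
  obtain hfg | hlen := hne
  · exact hfg heq.1
  · exact hlen (by simpa using congrArg List.length heq.2)

theorem not_unifies_of_isOccursFail {p : Tm F V × Tm F V} (h : IsOccursFail p) :
    Tm.subst θ p.1 ≠ Tm.subst θ p.2 := by
  obtain ⟨x, t, hp, hocc, hne⟩ := h
  obtain ⟨g, ss, rfl⟩ : ∃ g ss, t = .app g ss := by
    cases hocc with
    | var => exact absurd rfl hne
    | @app g ss => exact ⟨g, ss, rfl⟩
  have := Tm.apply_ne_subst_app_of_occurs hocc θ
  obtain rfl | rfl := hp
  · simpa using this
  · simpa using this.symm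

theorem not_unifies_of_fails {S : Multiset (Tm F V × Tm F V)} (h : Fails S) :
    ¬ Unifies θ S := fun hθ => by
  obtain ⟨p, hp, hclash | hocc⟩ := h
  · exact not_unifies_of_isClash hclash (hθ p hp)
  · exact not_unifies_of_isOccursFail hocc (hθ p hp)

theorem Step.unifies_iff [DecidableEq V] {S S' : Multiset (Tm F V × Tm F V)}
    (h : Step S S') : Unifies θ S ↔ Unifies θ S' := by
  cases h with
  | decompose f ts ss R hlen =>
    rw [unifies_cons, unifies_add, subst_app_eq_subst_app_iff_unifies_zip hlen]
  | delete t R => simp [unifies_cons]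
  | orient t x R => simp only [unifies_cons, eq_comm]
  | elim x t R =>
    simp only [unifies_cons, Tm.subst_var]
    exact and_congr_right fun hx => (unifies_map_applyEq_single hx).symm

theorem unifies_iff_of_reflTransGen [DecidableEq V] {S S' : Multiset (Tm F V × Tm F V)}
    (h : Relation.ReflTransGen Step S S') : Unifies θ S ↔ Unifies θ S' := by
  induction h with
  | refl => rfl
  | tail _ hstep ih => exact ih.trans hstep.unifies_iff

end Unifies

open Classical in
noncomputable def solvedSubst {F V : Type} (L : List (V × Tm F V)) (y : V) : Tm F V :=
  if h : ∃ t, (y, t) ∈ L then h.choose else .var y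

theorem SolvedWith.unifies_solvedSubst {F V : Type} {S : Multiset (Tm F V × Tm F V)}
    {L : List (V × Tm F V)} (h : SolvedWith S L) : Unifies (solvedSubst L) S := by
  obtain ⟨rfl, hnodup, hocc⟩ := h
  have solvedSubst_of_mem : ∀ q ∈ L, solvedSubst L q.1 = q.2 := fun q hq => by
    have hex : ∃ t, (q.1, t) ∈ L := ⟨q.2, hq⟩
    rw [solvedSubst, dif_pos hex]
    exact congrArg Prod.snd (List.inj_on_of_nodup_map hnodup hex.choose_spec hq rfl)
  simp only [Unifies, Multiset.mem_coe, List.forall_mem_map, Tm.subst_var]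
  intro q hq
  rw [solvedSubst_of_mem q hq, Tm.subst_eq_self]
  intro y hy
  rw [solvedSubst, dif_neg]
  rintro ⟨t, hyt⟩
  exact hocc (y, t) hyt q hq hy

/-- If the typed unification algorithm returns `false` — i.e. the type
phase succeeds (reaching a solved form) but the term phase fails — then some type
substitution unifies all of `T` while no term substitution unifies all of `C`. -/
theorem false_result_sound {F V TF TV : Type} [DecidableEq V] [DecidableEq TV]
    (C C' : Multiset (Tm F V × Tm F V)) (T T' : Multiset (Tm TF TV × Tm TF TV))
    (hT : Relation.ReflTransGen Step T T') (hTsolved : Solved T')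
    (hC : Relation.ReflTransGen Step C C') (hCfail : Fails C') :
    (∃ μ : TV → Tm TF TV, Unifies μ T) ∧ ¬ ∃ θ : V → Tm F V, Unifies θ C := by
  obtain ⟨L, hL⟩ := hTsolved
  refine ⟨⟨solvedSubst L, (unifies_iff_of_reflTransGen hT).2 hL.unifies_solvedSubst⟩, ?_⟩
  rintro ⟨θ, hθ⟩
  exact not_unifies_of_fails hCfail ((unifies_iff_of_reflTransGen hC).1 hθ)
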